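/- Let V : L^1([0,1]) → C([0,1]) be the Volterra operator. Then the distance from V to the set of weakly compact operators equals 1/2, i.e. inf{‖V − S‖ : S : L^1([0,1]) → C([0,1]) bounded linear and weakly compact} = 1/2. -/

import Mathlib

open MeasureTheory Set Filter Topology

/-!
The rank-one operator `S₀ f = ½ ∫ f` is at distance `½` from `V`, since
`Vf(x) - S₀f(x) = ½ (∫_{(0,x]} f - ∫_{(x,1]} f)`.

Conversely, the unit vectors `uₘ = (m+1) 𝟙_{(0,1/(m+1)]}` satisfy `Vuₘ(0) = 0` and `Vuₘ(y) = 1` for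
`y ≥ 1/(m+1)`. For weakly compact `S`, the sequence `Suₘ` has a weak cluster point `g ∈ C[0,1]`.
Point evaluations are weakly continuous and `g` is continuous at `0`, so for small `y` the increment
`Suₘ(y) - Suₘ(0)` is frequently almost `0`, while that of `Vuₘ` is `1`: one of
`|(V - S)uₘ(0)|`, `|(V - S)uₘ(y)|` is then almost `≥ ½`.
-/

/-- Lebesgue measure restricted to `[0,1]`. -/
noncomputable def mu01 : Measure ℝ := volume.restrict (Icc (0:ℝ) 1)

/-- A bounded linear operator between normed spaces is weakly compact if the closure,
in the weak topology of the codomain, of the image of the closed unit ball is compact. -/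
def IsWeaklyCompactOperator {X Y : Type*} [NormedAddCommGroup X] [NormedSpace ℝ X]
    [NormedAddCommGroup Y] [NormedSpace ℝ Y] (S : X →L[ℝ] Y) : Prop :=
  IsCompact (closure ((toWeakSpace ℝ Y) '' (⇑S '' Metric.closedBall 0 1)))

section WeakCompactness

variable {X Y : Type*} [NormedAddCommGroup X] [NormedSpace ℝ X]
  [NormedAddCommGroup Y] [NormedSpace ℝ Y]

theorem IsCompactOperator.isWeaklyCompactOperator {S : X →L[ℝ] Y} (hS : IsCompactOperator S) :
    IsWeaklyCompactOperator S := by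
  obtain ⟨K, hK, hSK⟩ := hS.image_closedBall_subset_compact 1
  have hKweak : IsCompact (toWeakSpace ℝ Y '' K) := hK.image (toWeakSpaceCLM ℝ Y).continuous
  exact hKweak.of_isClosed_subset isClosed_closure
    (closure_minimal (image_mono hSK) hKweak.isClosed)

theorem IsWeaklyCompactOperator.exists_mapClusterPt {S : X →L[ℝ] Y}
    (hS : IsWeaklyCompactOperator S) {u : ℕ → X} (hu : ∀ m, ‖u m‖ ≤ 1) :
    ∃ g : Y, MapClusterPt (toWeakSpace ℝ Y g) atTop (fun m ↦ toWeakSpace ℝ Y (S (u m))) := by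
  have hmem : ∀ m, toWeakSpace ℝ Y (S (u m)) ∈
      closure (toWeakSpace ℝ Y '' (S '' Metric.closedBall 0 1)) := fun m ↦
    subset_closure ⟨S (u m), ⟨u m, by simpa using hu m, rfl⟩, rfl⟩
  obtain ⟨w, -, hw⟩ := IsCompact.exists_mapClusterPt hS
    (tendsto_principal.2 (Eventually.of_forall (f := atTop) hmem))
  exact ⟨(toWeakSpace ℝ Y).symm w, by simpa using hw⟩

theorem MapClusterPt.apply_strongDual {ι : Type*} {l : Filter ι} {g : Y} {v : ι → Y}
    (h : MapClusterPt (toWeakSpace ℝ Y g) l (fun i ↦ toWeakSpace ℝ Y (v i)))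
    (φ : StrongDual ℝ Y) : MapClusterPt (φ g) l (fun i ↦ φ (v i)) :=
  h.continuousAt_comp (f := fun w : WeakSpace ℝ Y ↦ φ ((toWeakSpace ℝ Y).symm w))
    (WeakBilin.eval_continuous (topDualPairing ℝ Y).flip φ).continuousAt

end WeakCompactness

section HalfIntegral

variable {α : Type*} [MeasurableSpace α] {μ : Measure α}

theorem abs_setIntegral_sub_half_integral_le {f : α → ℝ} (hf : Integrable f μ) {s : Set α}
    (hs : MeasurableSet s) :
    |∫ t in s, f t ∂μ - 1 / 2 * ∫ t, f t ∂μ| ≤ 1 / 2 * ∫ t, |f t| ∂μ := by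
  have hsplit := integral_add_compl hs hf
  have hsplit_abs := integral_add_compl hs hf.abs
  have hin := abs_le.1 (abs_integral_le_integral_abs (f := f) (μ := μ.restrict s))
  have hout := abs_le.1 (abs_integral_le_integral_abs (f := f) (μ := μ.restrict sᶜ))
  rw [abs_le]
  constructor <;> linarith [hin.1, hin.2, hout.1, hout.2]

variable (μ) (K : Type*) [TopologicalSpace K]

noncomputable def halfIntegralConst : Lp ℝ 1 μ →L[ℝ] C(K, ℝ) :=
  (ContinuousLinearMap.toSpanSingleton ℝ 1).comp ((1 / 2 : ℝ) • L1.integralCLM)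

variable {μ K}

theorem halfIntegralConst_apply (f : Lp ℝ 1 μ) (x : K) :
    halfIntegralConst μ K f x = 1 / 2 * ∫ t, f t ∂μ := by
  simp [halfIntegralConst, ← L1.integral_eq, L1.integral_eq_integral]

theorem isCompactOperator_halfIntegralConst : IsCompactOperator (halfIntegralConst μ K) :=
  (isCompactOperator_of_locallyCompactSpace_dom ((1 / 2 : ℝ) • L1.integralCLM)).clm_comp
    (ContinuousLinearMap.toSpanSingleton ℝ 1)

theorem norm_sub_halfIntegralConst_le [CompactSpace K] {T : Lp ℝ 1 μ →L[ℝ] C(K, ℝ)}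
    {s : K → Set α} (hs : ∀ x, MeasurableSet (s x)) (hT : ∀ f x, T f x = ∫ t in s x, f t ∂μ) :
    ‖T - halfIntegralConst μ K‖ ≤ 1 / 2 := by
  refine (T - halfIntegralConst μ K).opNorm_le_bound (by norm_num) fun f ↦ ?_
  refine (ContinuousMap.norm_le _ (by positivity)).2 fun x ↦ ?_
  rw [L1.norm_eq_integral_norm]
  simpa [hT, halfIntegralConst_apply] using
    abs_setIntegral_sub_half_integral_le (L1.integrable_coeFn f) (hs x)

end HalfIntegral

section ContinuousFunctions

variable {K X : Type*} [TopologicalSpace K] [CompactSpace K]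
  [NormedAddCommGroup X] [NormedSpace ℝ X]

theorem one_half_le_norm_sub_of_jump {T S : X →L[ℝ] C(K, ℝ)} (hS : IsWeaklyCompactOperator S)
    {u : ℕ → X} (hu : ∀ m, ‖u m‖ ≤ 1) {x : K} {y : ℕ → K} (hy : Tendsto y atTop (𝓝 x))
    (hjump : ∀ N m, N ≤ m → T (u m) (y N) - T (u m) x = 1) : 1 / 2 ≤ ‖T - S‖ := by
  obtain ⟨g, hg⟩ := hS.exists_mapClusterPt hu
  have hbound : ∀ m z, |(T - S) (u m) z| ≤ ‖T - S‖ := fun m z ↦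
    (((T - S) (u m)).norm_coe_le_norm z).trans (by simpa using (T - S).le_opNorm_of_le (hu m))
  refine le_of_forall_pos_le_add fun ε hε ↦ ?_
  have hgy : Tendsto (fun N ↦ g (y N) - g x) atTop (𝓝 0) := by
    simpa using ((g.continuous.tendsto x).comp hy).sub_const (g x)
  obtain ⟨N, hN⟩ := (hgy.eventually (Metric.ball_mem_nhds 0 hε)).exists
  have hφ := hg.apply_strongDual (ContinuousMap.evalCLM ℝ (y N) - ContinuousMap.evalCLM ℝ x)
  obtain ⟨m, hNm, hm⟩ := frequently_atTop.1 (hφ.frequently (Metric.ball_mem_nhds _ hε)) N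
  simp only [Real.dist_eq, sub_zero, sub_apply, ContinuousMap.evalCLM_apply] at hN hm
  have hTjump := hjump N m hNm
  have hyN := abs_le.1 (hbound m (y N))
  have hx := abs_le.1 (hbound m x)
  simp only [sub_apply, ContinuousMap.sub_apply] at hyN hx
  rw [abs_lt] at hN hm
  linarith [hN.1, hm.1, hyN.2, hx.1]

end ContinuousFunctions

instance : IsFiniteMeasure mu01 := Real.isFiniteMeasure_restrict_Icc 0 1

theorem mu01_real_Ioc {a : ℝ} (ha₀ : 0 ≤ a) (ha₁ : a ≤ 1) : mu01.real (Ioc 0 a) = a := by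
  rw [mu01, measureReal_restrict_apply measurableSet_Ioc,
    inter_eq_left.2 (Ioc_subset_Icc_self.trans (Icc_subset_Icc_right ha₁)), Real.volume_real_Ioc,
    sub_zero, max_eq_left ha₀]

noncomputable def bump (a : ℝ) : Lp ℝ 1 mu01 :=
  indicatorConstLp 1 measurableSet_Ioc (measure_ne_top mu01 (Ioc 0 a)) a⁻¹

theorem norm_bump {a : ℝ} (ha₀ : 0 < a) (ha₁ : a ≤ 1) : ‖bump a‖ = 1 := by
  rw [bump, norm_indicatorConstLp one_ne_zero ENNReal.one_ne_top, mu01_real_Ioc ha₀.le ha₁]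
  simp [ha₀.ne', abs_of_pos ha₀]

theorem setIntegral_Ioc_bump {a y : ℝ} (ha₀ : 0 < a) (hay : a ≤ y) (hy₁ : y ≤ 1) :
    ∫ t in Ioc 0 y, bump a t ∂mu01 = 1 := by
  rw [bump, setIntegral_indicatorConstLp measurableSet_Ioc,
    inter_eq_left.2 (Ioc_subset_Ioc_right hay), mu01_real_Ioc ha₀.le (hay.trans hy₁), smul_eq_mul,
    mul_inv_cancel₀ ha₀.ne']

theorem one_half_le_norm_volterra_sub {V S : Lp ℝ 1 mu01 →L[ℝ] C(Icc (0:ℝ) 1, ℝ)}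
    (hV : ∀ f x, V f x = ∫ t in Ioc (0:ℝ) (x:ℝ), (f : ℝ → ℝ) t ∂mu01)
    (hS : IsWeaklyCompactOperator S) : 1 / 2 ≤ ‖V - S‖ := by
  have hpos (N : ℕ) : (0 : ℝ) < 1 / (N + 1) := Nat.one_div_pos_of_nat
  have hle (N : ℕ) : 1 / ((N : ℝ) + 1) ≤ 1 := by
    rw [div_le_one (by positivity)]; linarith [N.cast_nonneg (α := ℝ)]
  refine one_half_le_norm_sub_of_jump hS (u := fun m ↦ bump (1 / (m + 1)))
    (fun m ↦ (norm_bump (hpos m) (hle m)).le) (x := ⟨0, left_mem_Icc.2 zero_le_one⟩)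
    (y := fun N ↦ ⟨1 / (N + 1), (hpos N).le, hle N⟩) ?_ fun N m hNm ↦ ?_
  · exact tendsto_subtype_rng.2 tendsto_one_div_add_atTop_nhds_zero_nat
  · rw [hV, hV, Ioc_self, Measure.restrict_empty, integral_zero_measure, sub_zero]
    exact setIntegral_Ioc_bump (hpos m) (Nat.one_div_le_one_div hNm) (hle N)

/-- The distance from the Volterra operator
`V : L¹([0,1]) → C([0,1])` to the weakly compact operators equals `1/2`. -/
theorem volterra_weakEssentialNorm_eq_half
    (V : Lp ℝ 1 mu01 →L[ℝ] C(Icc (0:ℝ) 1, ℝ))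
    (hV : ∀ (f : Lp ℝ 1 mu01) (x : Icc (0:ℝ) 1),
      V f x = ∫ t in Ioc (0:ℝ) (x:ℝ), (f : ℝ → ℝ) t ∂mu01) :
    sInf {c : ℝ | ∃ S : Lp ℝ 1 mu01 →L[ℝ] C(Icc (0:ℝ) 1, ℝ),
      IsWeaklyCompactOperator S ∧ c = ‖V - S‖} = 1/2 := by
  have hS₀ : IsWeaklyCompactOperator (halfIntegralConst mu01 (Icc (0:ℝ) 1)) :=
    isCompactOperator_halfIntegralConst.isWeaklyCompactOperator
  have hnorm : ‖V - halfIntegralConst mu01 (Icc (0:ℝ) 1)‖ = 1 / 2 :=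
    le_antisymm (norm_sub_halfIntegralConst_le (fun _ ↦ measurableSet_Ioc) hV)
      (one_half_le_norm_volterra_sub hV hS₀)
  refine IsLeast.csInf_eq ⟨⟨_, hS₀, hnorm.symm⟩, ?_⟩
  rintro c ⟨S, hS, rfl⟩
  exact one_half_le_norm_volterra_sub hV hS
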